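/- arXiv:0909.4381 — 3 statements merged into one kernel-verified Lean document; each statement's English description precedes it below -/
import Mathlib

section
/- In the quotient ring ℂ[a,b]/(a−b, (W(a)−W(b))/(a−b)), where W ∈ ℂ[x], the quotient is isomorphic as a ℂ-algebra to the Jacobi ring ℂ[x]/(W'(x)). -/
open MvPolynomial

/-!
Restricting to the diagonal `a = b` identifies `ℂ[a,b]/(a - b)` with `ℂ[x]`, so that
`ℂ[a,b]/(a - b, Q) ≅ ℂ[x]/(Q(x,x))`.
Differentiating `(a - b) Q(a,b) = W(a) - W(b)` in `a` gives
`Q + (a - b) ∂ₐQ = W'(a)`, and setting `a = b = x` yields `Q(x,x) = W'(x)`.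
-/

section Diagonal

variable {R : Type*} [CommRing R]

noncomputable def evalDiagonal : MvPolynomial (Fin 2) R →ₐ[R] Polynomial R :=
  aeval fun _ => Polynomial.X

@[simp]
lemma evalDiagonal_X (i : Fin 2) : evalDiagonal (X i : MvPolynomial (Fin 2) R) = Polynomial.X :=
  aeval_X _ _

lemma evalDiagonal_eq_derivative (W : Polynomial R) (Q : MvPolynomial (Fin 2) R)
    (hQ : (X 0 - X 1) * Q = Polynomial.aeval (X 0) W - Polynomial.aeval (X 1) W) :
    evalDiagonal Q = Polynomial.derivative W := by
  have hpderiv :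
      Q + (X 0 - X 1) * pderiv 0 Q = Polynomial.aeval (X 0) (Polynomial.derivative W) := by
    have h := congrArg (pderiv (0 : Fin 2)) hQ
    rw [Derivation.leibniz, map_sub, map_sub, Derivation.map_aeval, Derivation.map_aeval,
      pderiv_X_self, pderiv_X_of_ne (by decide)] at h
    simpa [smul_eq_mul, mul_comm, add_comm] using h
  have h := congrArg evalDiagonal hpderiv
  rwa [map_add, map_mul, map_sub, evalDiagonal_X, evalDiagonal_X, sub_self, zero_mul, add_zero,
    ← Polynomial.aeval_algHom_apply, evalDiagonal_X, Polynomial.aeval_X_left_apply] at h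

lemma mkₐ_comp_aeval_X_zero_comp_evalDiagonal {I : Ideal (MvPolynomial (Fin 2) R)}
    (hI : X 0 - X 1 ∈ I) :
    (Ideal.Quotient.mkₐ R I).comp ((Polynomial.aeval (X 0)).comp evalDiagonal) =
      Ideal.Quotient.mkₐ R I := by
  refine MvPolynomial.algHom_ext fun i => ?_
  fin_cases i
  · simp
  · simpa using (Ideal.Quotient.mk_eq_mk_iff_sub_mem _ _).mpr hI

noncomputable def quotientSpanSubEquivQuotientEvalDiagonal (Q : MvPolynomial (Fin 2) R) :
    (MvPolynomial (Fin 2) R ⧸ Ideal.span {X 0 - X 1, Q}) ≃ₐ[R]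
      (Polynomial R ⧸ Ideal.span {evalDiagonal Q}) := by
  set I : Ideal (MvPolynomial (Fin 2) R) := Ideal.span {X 0 - X 1, Q}
  set J : Ideal (Polynomial R) := Ideal.span {evalDiagonal Q}
  have hsub : X 0 - X 1 ∈ I := Ideal.subset_span (by simp)
  have hQ : Q ∈ I := Ideal.subset_span (by simp)
  have hsection := mkₐ_comp_aeval_X_zero_comp_evalDiagonal hsub
  have hIJ : I ≤ J.comap evalDiagonal := Ideal.span_le.mpr <| by
    rintro p (rfl | rfl)
    · simp
    · exact Ideal.subset_span rfl
  have hJI : J ≤ I.comap (Polynomial.aeval (X 0)) := Ideal.span_le.mpr <| by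
    rintro p rfl
    have h : Ideal.Quotient.mk I (Polynomial.aeval (X 0) (evalDiagonal Q)) =
        Ideal.Quotient.mk I Q := AlgHom.congr_fun hsection Q
    rw [SetLike.mem_coe, Ideal.mem_comap, ← Ideal.Quotient.eq_zero_iff_mem, h,
      Ideal.Quotient.eq_zero_iff_mem]
    exact hQ
  refine AlgEquiv.ofAlgHom (Ideal.quotientMapₐ J evalDiagonal hIJ)
    (Ideal.quotientMapₐ I (Polynomial.aeval (X 0)) hJI)
    (Ideal.Quotient.algHom_ext _ (Polynomial.algHom_ext ?_)) (Ideal.Quotient.algHom_ext _ ?_)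
  · simp [Ideal.quotient_map_mkₐ]
  · rwa [AlgHom.comp_assoc, Ideal.quotient_map_comp_mkₐ, ← AlgHom.comp_assoc,
      Ideal.quotient_map_comp_mkₐ, AlgHom.comp_assoc]

end Diagonal

/-- For `W ∈ ℂ[x]` and `Q = (W(a)-W(b))/(a-b) ∈ ℂ[a,b]`, the quotient ring
`ℂ[a,b]/(a−b, Q)` is isomorphic as a `ℂ`-algebra to the Jacobi ring `ℂ[x]/(W')`. -/
theorem stmt_5 (W : Polynomial ℂ) (Q : MvPolynomial (Fin 2) ℂ)
    (hQ : (X 0 - X 1) * Q =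
      Polynomial.aeval (X 0 : MvPolynomial (Fin 2) ℂ) W -
        Polynomial.aeval (X 1 : MvPolynomial (Fin 2) ℂ) W) :
    Nonempty ((MvPolynomial (Fin 2) ℂ ⧸ Ideal.span {X 0 - X 1, Q}) ≃ₐ[ℂ]
      (Polynomial ℂ ⧸ Ideal.span {Polynomial.derivative W})) :=
  ⟨(quotientSpanSubEquivQuotientEvalDiagonal Q).trans
    (Ideal.quotientEquivAlgOfEq ℂ (by rw [evalDiagonal_eq_derivative W Q hQ]))⟩
end

section
/- Let R = ℂ[x] and consider the ℂ-linear maps on R ⊗ R ⊗ R (tensor over ℂ): A = the map given on r ⊗ x^n ⊗ t by r ⊗ x^n ⊗ t ↦ Σ_{i=0}^{n−1} x^i r ⊗ x^{n−1−i} ⊗ t (i.e. [((r_{xa}−1)/(a−x)) ⊗ 1]ˆ), and B = the map r ⊗ s ⊗ t ↦ xr ⊗ s ⊗ t − r ⊗ xs ⊗ t (i.e. [(a−x) ⊗ 1]ˆ). Then A ∘ B = −id on R ⊗ R ⊗ R. -/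
open TensorProduct

private abbrev RRR := Polynomial ℂ ⊗[ℂ] (Polynomial ℂ ⊗[ℂ] Polynomial ℂ)

set_option synthInstance.maxHeartbeats 1000000 in
private lemma aux_map_sub (A : RRR →ₗ[ℂ] RRR) (u v : RRR) : A (u - v) = A u - A v :=
  map_sub A u v

set_option synthInstance.maxHeartbeats 1000000 in
private lemma aux_map_zero (A : RRR →ₗ[ℂ] RRR) : A 0 = 0 :=
  map_zero A

/-- With `R = ℂ[x]`, let `A : R⊗R⊗R → R⊗R⊗R` be the map sending
`r ⊗ x^n ⊗ t` to `Σ_{i<n} x^i r ⊗ x^{n−1−i} ⊗ t`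
(i.e. `[((r_{xa}−1)/(a−x)) ⊗ 1]ˆ`), and let `B` be the map
`r ⊗ s ⊗ t ↦ xr ⊗ s ⊗ t − r ⊗ xs ⊗ t` (i.e. `[(a−x) ⊗ 1]ˆ`).
Then `A ∘ B = −id` on `R ⊗ R ⊗ R`. -/
theorem stmt_8
    (A B : Polynomial ℂ ⊗[ℂ] (Polynomial ℂ ⊗[ℂ] Polynomial ℂ) →ₗ[ℂ]
      Polynomial ℂ ⊗[ℂ] (Polynomial ℂ ⊗[ℂ] Polynomial ℂ))
    (hA : ∀ (r t : Polynomial ℂ) (n : ℕ),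
      A (r ⊗ₜ[ℂ] (((Polynomial.X : Polynomial ℂ) ^ n) ⊗ₜ[ℂ] t)) =
        ∑ i ∈ Finset.range n,
          ((Polynomial.X : Polynomial ℂ) ^ i * r) ⊗ₜ[ℂ]
            (((Polynomial.X : Polynomial ℂ) ^ (n - 1 - i)) ⊗ₜ[ℂ] t))
    (hB : ∀ (r s t : Polynomial ℂ),
      B (r ⊗ₜ[ℂ] (s ⊗ₜ[ℂ] t)) =
        (Polynomial.X * r) ⊗ₜ[ℂ] (s ⊗ₜ[ℂ] t) - r ⊗ₜ[ℂ] ((Polynomial.X * s) ⊗ₜ[ℂ] t)) :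
    ∀ v : Polynomial ℂ ⊗[ℂ] (Polynomial ℂ ⊗[ℂ] Polynomial ℂ), A (B v) = -v := by
  have key : ∀ (r t : Polynomial ℂ) (n : ℕ),
      A (B (r ⊗ₜ[ℂ] (((Polynomial.X : Polynomial ℂ) ^ n) ⊗ₜ[ℂ] t))) =
        -(r ⊗ₜ[ℂ] (((Polynomial.X : Polynomial ℂ) ^ n) ⊗ₜ[ℂ] t)) := by
    intro r t n
    rw [hB, aux_map_sub]
    have h1 : (Polynomial.X : Polynomial ℂ) * Polynomial.X ^ n = Polynomial.X ^ (n + 1) := by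
      rw [pow_succ, mul_comm]
    rw [h1, hA, hA]
    rw [Finset.sum_range_succ']
    have h2 : ∀ i ∈ Finset.range n,
        ((Polynomial.X : Polynomial ℂ) ^ i * (Polynomial.X * r)) ⊗ₜ[ℂ]
            (((Polynomial.X : Polynomial ℂ) ^ (n - 1 - i)) ⊗ₜ[ℂ] t) =
        ((Polynomial.X : Polynomial ℂ) ^ (i + 1) * r) ⊗ₜ[ℂ]
            (((Polynomial.X : Polynomial ℂ) ^ (n + 1 - 1 - (i + 1))) ⊗ₜ[ℂ] t) := by
      intro i _
      have e1 : (Polynomial.X : Polynomial ℂ) ^ i * (Polynomial.X * r) =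
          Polynomial.X ^ (i + 1) * r := by ring
      have e2 : n - 1 - i = n + 1 - 1 - (i + 1) := by omega
      rw [e1, e2]
    rw [Finset.sum_congr rfl h2]
    have e3 : (Polynomial.X : Polynomial ℂ) ^ 0 * r = r := by ring
    have e4 : n + 1 - 1 - 0 = n := by omega
    rw [e3, e4]
    abel
  intro v
  induction v using TensorProduct.induction_on with
  | zero => rw [aux_map_zero, aux_map_zero]; abel
  | add x y hx hy => rw [LinearMap.map_add, LinearMap.map_add, hx, hy]; abel
  | tmul r w =>
    induction w using TensorProduct.induction_on with
    | zero => rw [TensorProduct.tmul_zero, aux_map_zero, aux_map_zero]; abel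
    | add x y hx hy =>
      rw [TensorProduct.tmul_add, LinearMap.map_add, LinearMap.map_add, hx, hy]; abel
    | tmul s t =>
      induction s using Polynomial.induction_on' with
      | add p q hp hq =>
        rw [TensorProduct.add_tmul, TensorProduct.tmul_add, LinearMap.map_add,
          LinearMap.map_add, hp, hq]
        abel
      | monomial n c =>
        have hm : (Polynomial.monomial n c : Polynomial ℂ) = c • Polynomial.X ^ n := by
          rw [Polynomial.smul_X_eq_monomial]
        have hrt : r ⊗ₜ[ℂ] ((c • ((Polynomial.X : Polynomial ℂ) ^ n)) ⊗ₜ[ℂ] t) =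
            c • (r ⊗ₜ[ℂ] (((Polynomial.X : Polynomial ℂ) ^ n) ⊗ₜ[ℂ] t)) := by
          rw [← TensorProduct.smul_tmul', TensorProduct.tmul_smul]
        rw [hm, hrt, LinearMap.map_smul, LinearMap.map_smul, key]
        exact smul_neg c (r ⊗ₜ[ℂ] (((Polynomial.X : Polynomial ℂ) ^ n) ⊗ₜ[ℂ] t))
end

section
/- For integers d ≥ 3 and levels as in the su(2)_{d−2} fusion rules, the fusion coefficients N_{ij}^l defined by: N_{ij}^l = 1 if |i−j| ≤ l ≤ min(i+j, 2(d−2)−i−j) and l ≡ i+j (mod 2), and 0 otherwise, for i,j,l ∈ {0,…,d−2}, define an associative commutative ring structure on ℤ^{d−1} with unit the basis element indexed by 0: Σ_p N_{ij}^p N_{pk}^l = Σ_q N_{jk}^q N_{iq}^l for all i,j,k,l. -/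
private lemma iteMul (P Q : Prop) [Decidable P] [Decidable Q] :
    (if P then (1:ℤ) else 0) * (if Q then 1 else 0) = if P ∧ Q then 1 else 0 := by
  split_ifs <;> simp_all

private lemma countAux (B A e : ℕ) (he : A % 2 = e) :
    ((Finset.range (B+1)).filter (fun p => A ≤ p ∧ p ≤ B ∧ p % 2 = e)).card
      = (B + 2 - A) / 2 := by
  induction B with
  | zero =>
      rw [Finset.range_one, Finset.filter_singleton]
      split_ifs with h
      · simp only [Finset.card_singleton]; omega
      · simp only [Finset.card_empty]; omega
  | succ B ih =>
      have hcong : (Finset.range (B+1)).filter (fun p => A ≤ p ∧ p ≤ B+1 ∧ p % 2 = e)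
          = (Finset.range (B+1)).filter (fun p => A ≤ p ∧ p ≤ B ∧ p % 2 = e) := by
        apply Finset.filter_congr
        intro x hx
        simp only [Finset.mem_range] at hx
        constructor <;> intro h <;> exact ⟨h.1, by omega, h.2.2⟩
      rw [Finset.range_add_one, Finset.filter_insert]
      split_ifs with h
      · rw [Finset.card_insert_of_notMem (by simp), hcong, ih]
        omega
      · rw [hcong, ih]
        omega

private lemma countRange (n A B e : ℕ) (he : A % 2 = e) (hB : B < n) :
    ((Finset.range n).filter (fun p => A ≤ p ∧ p ≤ B ∧ p % 2 = e)).card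
      = (B + 2 - A) / 2 := by
  have h : ((Finset.range n).filter (fun p => A ≤ p ∧ p ≤ B ∧ p % 2 = e))
      = ((Finset.range (B+1)).filter (fun p => A ≤ p ∧ p ≤ B ∧ p % 2 = e)) := by
    ext x
    simp only [Finset.mem_filter, Finset.mem_range]
    omega
  rw [h, countAux B A e he]

private lemma sumCount (n A B e : ℕ) (Q : ℕ → Prop) [DecidablePred Q]
    (hQ : ∀ p, p < n → (Q p ↔ (A ≤ p ∧ p ≤ B ∧ p % 2 = e)))
    (he : A % 2 = e) (hB : B < n) :
    (∑ p ∈ Finset.range n, if Q p then (1:ℤ) else 0) = ((B + 2 - A) / 2 : ℕ) := by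
  rw [Finset.sum_boole]
  have h : (Finset.range n).filter Q
      = (Finset.range n).filter (fun p => A ≤ p ∧ p ≤ B ∧ p % 2 = e) := by
    apply Finset.filter_congr
    intro x hx
    exact hQ x (Finset.mem_range.mp hx)
  rw [h, countRange n A B e he hB]

private lemma exA (i j k l : ℕ) : ∃ A, i ≤ j + A ∧ j ≤ i + A ∧ k ≤ l + A ∧ l ≤ k + A ∧
    (A + j = i ∨ A + i = j ∨ A + l = k ∨ A + k = l) :=
  ⟨max (max (i-j) (j-i)) (max (k-l) (l-k)), by omega⟩

private lemma exB (K i j k l : ℕ) (hi : i ≤ K) (hj : j ≤ K) (hk : k ≤ K) (hl : l ≤ K) :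
    ∃ B, B ≤ i+j ∧ B ≤ k+l ∧ B+i+j ≤ 2*K ∧ B+k+l ≤ 2*K ∧
    (B = i+j ∨ B = k+l ∨ B + i + j = 2*K ∨ B + k + l = 2*K) :=
  ⟨min (min (i+j) (k+l)) (min (2*K - (i+j)) (2*K - (k+l))), by omega⟩

private lemma key (d i j k l : ℕ) (hd : 3 ≤ d) (hi : i ≤ d-2) (hj : j ≤ d-2)
    (hk : k ≤ d-2) (hl : l ≤ d-2) :
    (∑ p ∈ Finset.range (d-1),
      (if i ≤ j + p ∧ j ≤ i + p ∧ p ≤ i + j ∧ p + i + j ≤ 2 * (d - 2) ∧ (i + j + p) % 2 = 0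
        then (1:ℤ) else 0) *
      (if p ≤ k + l ∧ k ≤ p + l ∧ l ≤ p + k ∧ l + p + k ≤ 2 * (d - 2) ∧ (p + k + l) % 2 = 0
        then 1 else 0))
    = (∑ q ∈ Finset.range (d-1),
      (if j ≤ k + q ∧ k ≤ j + q ∧ q ≤ j + k ∧ q + j + k ≤ 2 * (d - 2) ∧ (j + k + q) % 2 = 0
        then (1:ℤ) else 0) *
      (if q ≤ i + l ∧ i ≤ q + l ∧ l ≤ q + i ∧ l + q + i ≤ 2 * (d - 2) ∧ (q + i + l) % 2 = 0
        then 1 else 0)) := by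
  have hLp : ∀ S : Finset ℕ, ∀ a b c e : ℕ,
      (∑ p ∈ S,
        (if a ≤ b + p ∧ b ≤ a + p ∧ p ≤ a + b ∧ p + a + b ≤ 2 * (d - 2) ∧ (a + b + p) % 2 = 0
          then (1:ℤ) else 0) *
        (if p ≤ c + e ∧ c ≤ p + e ∧ e ≤ p + c ∧ e + p + c ≤ 2 * (d - 2) ∧ (p + c + e) % 2 = 0
          then 1 else 0))
      = ∑ p ∈ S,
          (if (a ≤ b + p ∧ b ≤ a + p ∧ p ≤ a + b ∧ p + a + b ≤ 2 * (d - 2) ∧ (a + b + p) % 2 = 0)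
              ∧ (p ≤ c + e ∧ c ≤ p + e ∧ e ≤ p + c ∧ e + p + c ≤ 2 * (d - 2) ∧ (p + c + e) % 2 = 0)
            then (1:ℤ) else 0) :=
    fun S a b c e => Finset.sum_congr rfl (fun p _ => iteMul _ _)
  rw [hLp, hLp]
  by_cases hpar : (i + j + k + l) % 2 = 0
  · obtain ⟨A1, h1a, h1b, h1c, h1d, h1e⟩ := exA i j k l
    obtain ⟨B1, g1a, g1b, g1c, g1d, g1e⟩ := exB (d-2) i j k l hi hj hk hl
    have hQ1 : ∀ p, p < d-1 →
        (((i ≤ j + p ∧ j ≤ i + p ∧ p ≤ i + j ∧ p + i + j ≤ 2 * (d - 2) ∧ (i + j + p) % 2 = 0)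
          ∧ (p ≤ k + l ∧ k ≤ p + l ∧ l ≤ p + k ∧ l + p + k ≤ 2 * (d - 2) ∧ (p + k + l) % 2 = 0))
          ↔ (A1 ≤ p ∧ p ≤ B1 ∧ p % 2 = (i + j) % 2)) := by
      intro p hp
      omega
    have L1 := sumCount (d-1) A1 B1 ((i+j) % 2)
      (fun p => (i ≤ j + p ∧ j ≤ i + p ∧ p ≤ i + j ∧ p + i + j ≤ 2 * (d - 2) ∧ (i + j + p) % 2 = 0)
          ∧ (p ≤ k + l ∧ k ≤ p + l ∧ l ≤ p + k ∧ l + p + k ≤ 2 * (d - 2) ∧ (p + k + l) % 2 = 0))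
      hQ1 (by omega) (by omega)
    obtain ⟨A2, h2a, h2b, h2c, h2d, h2e⟩ := exA j k i l
    obtain ⟨B2, g2a, g2b, g2c, g2d, g2e⟩ := exB (d-2) j k i l hj hk hi hl
    have hQ2 : ∀ q, q < d-1 →
        (((j ≤ k + q ∧ k ≤ j + q ∧ q ≤ j + k ∧ q + j + k ≤ 2 * (d - 2) ∧ (j + k + q) % 2 = 0)
          ∧ (q ≤ i + l ∧ i ≤ q + l ∧ l ≤ q + i ∧ l + q + i ≤ 2 * (d - 2) ∧ (q + i + l) % 2 = 0))
          ↔ (A2 ≤ q ∧ q ≤ B2 ∧ q % 2 = (j + k) % 2)) := by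
      intro q hq
      clear h1e g1e hQ1 L1
      omega
    have L2 := sumCount (d-1) A2 B2 ((j+k) % 2)
      (fun q => (j ≤ k + q ∧ k ≤ j + q ∧ q ≤ j + k ∧ q + j + k ≤ 2 * (d - 2) ∧ (j + k + q) % 2 = 0)
          ∧ (q ≤ i + l ∧ i ≤ q + l ∧ l ≤ q + i ∧ l + q + i ≤ 2 * (d - 2) ∧ (q + i + l) % 2 = 0))
      hQ2 (by clear h1e g1e hQ1 L1; omega) (by clear h1e g1e hQ1 L1; omega)
    rw [L1, L2]
    have hEq : B1 + A2 = B2 + A1 := by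
      clear hQ1 hQ2 L1 L2 hpar hd
      omega
    clear h1e g1e h2e g2e hQ1 hQ2 L1 L2
    omega
  · rw [Finset.sum_eq_zero, Finset.sum_eq_zero]
    · intro q _
      rw [if_neg]
      omega
    · intro p _
      rw [if_neg]
      omega

/-- The Verlinde fusion coefficients of `su(2)` at level `d−2`:
`N_{ij}^l = 1` iff `|i−j| ≤ l ≤ min(i+j, 2(d−2)−i−j)` and `l ≡ i+j (mod 2)`,
for `i,j,l ∈ {0,…,d−2}`, define an associative, commutative ring structure on
`ℤ^{d−1}` with unit the basis element indexed by `0`. -/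
theorem stmt_12 (d : ℕ) (hd : 3 ≤ d) :
    let Nf : ℕ → ℕ → ℕ → ℤ := fun i j l =>
      if i ≤ j + l ∧ j ≤ i + l ∧ l ≤ i + j ∧ l + i + j ≤ 2 * (d - 2) ∧
          (i + j + l) % 2 = 0 then 1 else 0
    (∀ i j k l, i ≤ d - 2 → j ≤ d - 2 → k ≤ d - 2 → l ≤ d - 2 →
        ∑ p ∈ Finset.range (d - 1), Nf i j p * Nf p k l =
          ∑ q ∈ Finset.range (d - 1), Nf j k q * Nf i q l) ∧
      (∀ i j l, Nf i j l = Nf j i l) ∧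
      (∀ j l, j ≤ d - 2 → l ≤ d - 2 → Nf 0 j l = if j = l then 1 else 0) := by
  intro Nf
  refine ⟨?_, ?_, ?_⟩
  · intro i j k l hi hj hk hl
    simp only [Nf]
    have h2 : ∀ q : ℕ,
        (if i ≤ q + l ∧ q ≤ i + l ∧ l ≤ i + q ∧ l + i + q ≤ 2 * (d - 2) ∧ (i + q + l) % 2 = 0
          then (1:ℤ) else 0)
        = (if q ≤ i + l ∧ i ≤ q + l ∧ l ≤ q + i ∧ l + q + i ≤ 2 * (d - 2) ∧ (q + i + l) % 2 = 0
          then 1 else 0) := by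
      intro q
      apply if_congr _ rfl rfl
      omega
    have hR : (∑ q ∈ Finset.range (d-1),
        (if j ≤ k + q ∧ k ≤ j + q ∧ q ≤ j + k ∧ q + j + k ≤ 2 * (d - 2) ∧ (j + k + q) % 2 = 0
          then (1:ℤ) else 0) *
        (if i ≤ q + l ∧ q ≤ i + l ∧ l ≤ i + q ∧ l + i + q ≤ 2 * (d - 2) ∧ (i + q + l) % 2 = 0
          then 1 else 0))
        = (∑ q ∈ Finset.range (d-1),
        (if j ≤ k + q ∧ k ≤ j + q ∧ q ≤ j + k ∧ q + j + k ≤ 2 * (d - 2) ∧ (j + k + q) % 2 = 0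
          then (1:ℤ) else 0) *
        (if q ≤ i + l ∧ i ≤ q + l ∧ l ≤ q + i ∧ l + q + i ≤ 2 * (d - 2) ∧ (q + i + l) % 2 = 0
          then 1 else 0)) :=
      Finset.sum_congr rfl (fun q _ => by rw [h2 q])
    rw [hR, ← key d i j k l hd hi hj hk hl]
  · intro i j l
    simp only [Nf]
    split_ifs <;> omega
  · intro j l hj hl
    simp only [Nf]
    split_ifs <;> omega
end
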